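/- Bernstein inequality for sums of squares: let N ≥ 1, v : Fin N → Fin N → ℝ be symmetric (modeling the Hessian ∂ᵢ∂ⱼv), p : Fin N → ℝ (modeling ∇v), w := Σᵢ pᵢ², c ∈ ℝ, and m ∈ (0,1). Then Σ_{i,j} (v i j)² + c·(Σ_{i,j} pᵢ pⱼ v i j - w·Σᵢ v i i) ≥ -((c²/4)·(N-1))·w². (This is the algebraic heart of Bénilan's trick with c = (m-1)φ'/φ.) -/

import Mathlib

/-!
Write `e := p pᵀ - |p|² I`. The left-hand side is `Σ v² + c ⟨v, e⟩`, and completing the square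
entrywise, `(v i j + (c/2) e i j)² ≥ 0`, bounds it below by `-(c²/4) Σ e²`. Finally
`Σ e² = |p|⁴ - 2|p|⁴ + N |p|⁴ = (N - 1) |p|⁴`.
-/

open Finset

theorem neg_mul_sum_sq_le_sum_sq_add_mul_sum_mul {κ : Type*} (s : Finset κ) (a e : κ → ℝ)
    (c : ℝ) :
    -(c ^ 2 / 4 * ∑ k ∈ s, e k ^ 2) ≤ ∑ k ∈ s, a k ^ 2 + c * ∑ k ∈ s, a k * e k := by
  rw [mul_sum, mul_sum, ← sum_neg_distrib, ← sum_add_distrib]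
  gcongr with k
  nlinarith [sq_nonneg (a k + c / 2 * e k)]

section OuterSubNormSq

variable {ι : Type*} [Fintype ι] [DecidableEq ι]

noncomputable def outerSubNormSq (p : ι → ℝ) : Matrix ι ι ℝ :=
  Matrix.vecMulVec p p - (∑ k, p k ^ 2) • 1

theorem outerSubNormSq_apply (p : ι → ℝ) (i j : ι) :
    outerSubNormSq p i j = p i * p j - if i = j then ∑ k, p k ^ 2 else 0 := by
  simp [outerSubNormSq, Matrix.vecMulVec_apply, Matrix.one_apply]

theorem sum_sum_mul_outerSubNormSq (p : ι → ℝ) (v : ι → ι → ℝ) :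
    ∑ i, ∑ j, v i j * outerSubNormSq p i j =
      ∑ i, ∑ j, p i * p j * v i j - (∑ k, p k ^ 2) * ∑ i, v i i := by
  simp only [outerSubNormSq_apply, mul_sub, mul_ite, mul_zero, sum_sub_distrib, sum_ite_eq,
    mem_univ, if_true, ← sum_mul]
  rw [mul_comm (∑ k, p k ^ 2)]
  congr 1
  exact sum_congr rfl fun i _ => sum_congr rfl fun j _ => by ring

theorem sum_sum_outerSubNormSq_sq (p : ι → ℝ) :
    ∑ i, ∑ j, outerSubNormSq p i j ^ 2 = (Fintype.card ι - 1) * (∑ k, p k ^ 2) ^ 2 := by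
  set w := ∑ k, p k ^ 2
  have hrow : ∀ i, ∑ j, outerSubNormSq p i j ^ 2 = w ^ 2 - w * p i ^ 2 := by
    intro i
    have hentry : ∀ j, outerSubNormSq p i j ^ 2 =
        p i ^ 2 * p j ^ 2 + if i = j then w ^ 2 - 2 * w * p i ^ 2 else 0 := by
      intro j
      rw [outerSubNormSq_apply]
      split_ifs with h
      · subst h; ring
      · ring
    simp only [hentry, sum_add_distrib, ← mul_sum, sum_ite_eq, mem_univ, if_true]
    ring
  simp only [hrow, sum_sub_distrib, sum_const, card_univ, nsmul_eq_mul, ← mul_sum]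
  ring

end OuterSubNormSq

theorem bernstein_trick_general (N : ℕ) (v : Fin N → Fin N → ℝ)
    (p : Fin N → ℝ) (c : ℝ)
    (w : ℝ) (hw : w = ∑ i, p i ^ 2) :
    ∑ i, ∑ j, (v i j) ^ 2 +
        c * ((∑ i, ∑ j, p i * p j * v i j) - w * ∑ i, v i i) ≥
      -(c ^ 2 / 4 * ((N : ℝ) - 1)) * w ^ 2 := by
  have key := neg_mul_sum_sq_le_sum_sq_add_mul_sum_mul univ
    (fun ij : Fin N × Fin N => v ij.1 ij.2) (fun ij => outerSubNormSq p ij.1 ij.2) c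
  simp only [← univ_product_univ, sum_product] at key
  rw [sum_sum_outerSubNormSq_sq, sum_sum_mul_outerSubNormSq, Fintype.card_fin, ← hw] at key
  linarith

theorem bernstein_trick (N : ℕ) (hN : 1 ≤ N) (v : Fin N → Fin N → ℝ)
    (hsym : ∀ i j, v i j = v j i) (p : Fin N → ℝ) (c m : ℝ)
    (hm1 : 0 < m) (hm2 : m < 1) (w : ℝ) (hw : w = ∑ i, p i ^ 2) :
    ∑ i, ∑ j, (v i j) ^ 2 +
        c * ((∑ i, ∑ j, p i * p j * v i j) - w * ∑ i, v i i) ≥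
      -(c ^ 2 / 4 * ((N : ℝ) - 1)) * w ^ 2 :=
  bernstein_trick_general N v p c w hw
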